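/- Suppose ρ_{12} ≠ 0. If either (C_1 ≤ 1/2 < C_2 and q_0^{(0)} < q < q_0^{(1)}) or (1/2 < C_1 ≤ C_2 and C_1 < q < q_0^{(1)}), then every POVM attaining P̄_cor^opt(q) has M_1 = 0. -/

import Mathlib

open Matrix ComplexOrder

noncomputable section

namespace FRIR

/-- A three-outcome POVM on a qubit: `M₀` is the inconclusive outcome. -/
def IsPOVM (M₀ M₁ M₂ : Matrix (Fin 2) (Fin 2) ℂ) : Prop :=
  M₀.PosSemidef ∧ M₁.PosSemidef ∧ M₂.PosSemidef ∧ M₀ + M₁ + M₂ = 1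

/-- `ρ₀ = q₁ρ₁ + q₂ρ₂`. -/
def rho0 (q₁ q₂ : ℝ) (ρ₁ ρ₂ : Matrix (Fin 2) (Fin 2) ℂ) : Matrix (Fin 2) (Fin 2) ℂ :=
  (q₁ : ℂ) • ρ₁ + (q₂ : ℂ) • ρ₂

/-- The probability of the inconclusive result, `P_I = tr(ρ₀M₀)`. -/
def PIof (q₁ q₂ : ℝ) (ρ₁ ρ₂ M₀ : Matrix (Fin 2) (Fin 2) ℂ) : ℝ :=
  (Matrix.trace (rho0 q₁ q₂ ρ₁ ρ₂ * M₀)).re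

/-- `P_cor = q₁tr(ρ₁M₁) + q₂tr(ρ₂M₂)`. -/
def Pcor (q₁ q₂ : ℝ) (ρ₁ ρ₂ M₁ M₂ : Matrix (Fin 2) (Fin 2) ℂ) : ℝ :=
  q₁ * (Matrix.trace (ρ₁ * M₁)).re + q₂ * (Matrix.trace (ρ₂ * M₂)).re

/-- `P̄_cor = q·tr(ρ₀M₀) + q₁tr(ρ₁M₁) + q₂tr(ρ₂M₂)`. -/
def PbarCor (q q₁ q₂ : ℝ) (ρ₁ ρ₂ M₀ M₁ M₂ : Matrix (Fin 2) (Fin 2) ℂ) : ℝ :=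
  q * PIof q₁ q₂ ρ₁ ρ₂ M₀ + Pcor q₁ q₂ ρ₁ ρ₂ M₁ M₂

/-- `P̄_cor^opt(q)`: the maximal value of `P̄_cor` over all POVMs. -/
def PbarOpt (q q₁ q₂ : ℝ) (ρ₁ ρ₂ : Matrix (Fin 2) (Fin 2) ℂ) : ℝ :=
  sSup {x : ℝ | ∃ M₀ M₁ M₂, IsPOVM M₀ M₁ M₂ ∧ PbarCor q q₁ q₂ ρ₁ ρ₂ M₀ M₁ M₂ = x}

/-- `P_cor^opt(Q)`: the maximal value of `P_cor` over POVMs with `P_I = Q`. -/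
def PcorOpt (Q q₁ q₂ : ℝ) (ρ₁ ρ₂ : Matrix (Fin 2) (Fin 2) ℂ) : ℝ :=
  sSup {x : ℝ | ∃ M₀ M₁ M₂, IsPOVM M₀ M₁ M₂ ∧
    PIof q₁ q₂ ρ₁ ρ₂ M₀ = Q ∧ Pcor q₁ q₂ ρ₁ ρ₂ M₁ M₂ = x}

/-- `P_I(q) = { tr(ρ₀M₀) : POVMs attaining P̄_cor^opt(q) }`. -/
def PIset (q q₁ q₂ : ℝ) (ρ₁ ρ₂ : Matrix (Fin 2) (Fin 2) ℂ) : Set ℝ :=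
  {Q : ℝ | ∃ M₀ M₁ M₂, IsPOVM M₀ M₁ M₂ ∧
    PbarCor q q₁ q₂ ρ₁ ρ₂ M₀ M₁ M₂ = PbarOpt q q₁ q₂ ρ₁ ρ₂ ∧ PIof q₁ q₂ ρ₁ ρ₂ M₀ = Q}

/-- `q₀⁽⁰⁾ = sup{q > 0 : 0 ∈ P_I(q)}`. -/
def q0low (q₁ q₂ : ℝ) (ρ₁ ρ₂ : Matrix (Fin 2) (Fin 2) ℂ) : ℝ :=
  sSup {q : ℝ | 0 < q ∧ (0 : ℝ) ∈ PIset q q₁ q₂ ρ₁ ρ₂}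

/-- `q₀⁽¹⁾ = inf{q > 0 : 1 ∈ P_I(q)}`. -/
def q0high (q₁ q₂ : ℝ) (ρ₁ ρ₂ : Matrix (Fin 2) (Fin 2) ℂ) : ℝ :=
  sInf {q : ℝ | 0 < q ∧ (1 : ℝ) ∈ PIset q q₁ q₂ ρ₁ ρ₂}

end FRIR

/-!
With `S = ρ₀^{1/2}` and `Pᵢ = νᵢνᵢ*` (so `P₁ + P₂ = 1`), the hypotheses say
`q₁ρ₁ = S(C₁P₁ + (1-C₂)P₂)S` and `q₂ρ₂ = S((1-C₁)P₁ + C₂P₂)S`, while `cρ₀ = S(cP₁ + cP₂)S`.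
Comparing coefficients gives Loewner bounds, e.g. `q₁ρ₁ ≤ C₁ρ₀` because `1 - C₂ < C₁`.
If an optimal POVM had `M₁ ≠ 0`, moving `M₁` into the inconclusive outcome would change `P̄_cor`
by `q·tr(ρ₀M₁) - q₁tr(ρ₁M₁) ≥ (q - C₁)·tr(ρ₀M₁) > 0`; so it suffices that `C₁ < q`.
In the second case this is assumed. In the first, `q > q₀⁽⁰⁾ ≥ 1/2 ≥ C₁`: at `q = 1/2` the POVM
`(0, 0, 1)` is optimal since `ρ₀/2 ≤ q₂ρ₂` and `q₁ρ₁ ≤ q₂ρ₂`, and `0 ∈ P_I(q')` forces `q' ≤ C₂`,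
so the set defining `q₀⁽⁰⁾` is bounded above and its supremum is not a junk value.
-/

open scoped MatrixOrder

namespace Matrix

section Loewner

variable {n : Type*}

lemma PosSemidef.ofReal_smul_le_ofReal_smul {P : Matrix n n ℂ} (hP : P.PosSemidef) {x u : ℝ}
    (h : x ≤ u) : (x : ℂ) • P ≤ (u : ℂ) • P := by
  rw [le_iff, ← sub_smul, ← Complex.ofReal_sub]
  exact hP.smul (Complex.zero_le_real.mpr (sub_nonneg.mpr h))

variable [Fintype n]

lemma conj_smul_add_smul_le {S P₁ P₂ : Matrix n n ℂ} (hS : S.PosSemidef) (hP₁ : P₁.PosSemidef)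
    (hP₂ : P₂.PosSemidef) {x y u v : ℝ} (hxu : x ≤ u) (hyv : y ≤ v) :
    S * ((x : ℂ) • P₁ + (y : ℂ) • P₂) * S ≤ S * ((u : ℂ) • P₁ + (v : ℂ) • P₂) * S :=
  conjugate_le_conjugate_of_nonneg
    (add_le_add (hP₁.ofReal_smul_le_ofReal_smul hxu) (hP₂.ofReal_smul_le_ofReal_smul hyv))
    hS.nonneg

lemma trace_star_mul_self_mul (X M : Matrix n n ℂ) :
    (star X * X * M).trace = (X * M * Xᴴ).trace := by
  rw [Matrix.mul_assoc, trace_mul_comm, star_eq_conjTranspose]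

lemma PosSemidef.trace_mul_nonneg {A B : Matrix n n ℂ} (hA : A.PosSemidef) (hB : B.PosSemidef) :
    0 ≤ (A * B).trace := by
  classical
  obtain ⟨X, rfl⟩ := CStarAlgebra.nonneg_iff_eq_star_mul_self.mp hA.nonneg
  rw [trace_star_mul_self_mul]
  exact (hB.mul_mul_conjTranspose_same X).trace_nonneg

lemma PosSemidef.re_trace_mul_nonneg {A B : Matrix n n ℂ} (hA : A.PosSemidef)
    (hB : B.PosSemidef) : 0 ≤ (A * B).trace.re :=
  (Complex.nonneg_iff.mp (hA.trace_mul_nonneg hB)).1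

lemma re_trace_mul_mono {A B M : Matrix n n ℂ} (hAB : A ≤ B) (hM : M.PosSemidef) :
    (A * M).trace.re ≤ (B * M).trace.re := by
  have := (le_iff.mp hAB).re_trace_mul_nonneg hM
  rwa [Matrix.sub_mul, trace_sub, Complex.sub_re, sub_nonneg] at this

lemma re_trace_ofReal_smul_mul (c : ℝ) (A M : Matrix n n ℂ) :
    ((c : ℂ) • A * M).trace.re = c * (A * M).trace.re := by
  rw [Matrix.smul_mul, trace_smul, smul_eq_mul, Complex.re_ofReal_mul]

lemma re_trace_mul_le_of_smul_le {A B M : Matrix n n ℂ} {a b : ℝ}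
    (h : (a : ℂ) • A ≤ (b : ℂ) • B) (hM : M.PosSemidef) :
    a * (A * M).trace.re ≤ b * (B * M).trace.re := by
  simpa only [re_trace_ofReal_smul_mul] using re_trace_mul_mono h hM

/-- Writing `ρ = X*X`, a zero trace of `XMX*` forces `XMX* = 0`, hence `ρMρ = 0` and `M = 0`. -/
lemma PosDef.re_trace_mul_pos {ρ M : Matrix n n ℂ} (hρ : ρ.PosDef) (hM : M.PosSemidef)
    (hM0 : M ≠ 0) : 0 < (ρ * M).trace.re := by
  classical
  refine (Complex.pos_iff.mp
    (lt_of_le_of_ne (hρ.posSemidef.trace_mul_nonneg hM) fun h0 ↦ hM0 ?_)).1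
  obtain ⟨X, rfl⟩ := CStarAlgebra.nonneg_iff_eq_star_mul_self.mp hρ.posSemidef.nonneg
  rw [trace_star_mul_self_mul, eq_comm, (hM.mul_mul_conjTranspose_same X).trace_eq_zero_iff] at h0
  have : star X * X * M * (star X * X) = 0 := by
    rw [star_eq_conjTranspose] at *
    simp only [Matrix.mul_assoc] at h0 ⊢
    rw [← Matrix.mul_assoc M, ← Matrix.mul_assoc X, h0, Matrix.zero_mul, Matrix.mul_zero]
  exact (hρ.isUnit.mul_right_eq_zero).mp ((hρ.isUnit.mul_left_eq_zero).mp this)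

lemma sum_vecMulVec_self_star_eq_one [DecidableEq n] {ν : n → n → ℂ}
    (h : ∀ j k, star (ν j) ⬝ᵥ ν k = (1 : Matrix n n ℂ) j k) :
    ∑ k, vecMulVec (ν k) (star (ν k)) = 1 := by
  have hU : (Matrix.of ν)ᵀᴴ * (Matrix.of ν)ᵀ = 1 := by
    ext j k
    simpa [mul_apply, dotProduct] using h j k
  rw [← mul_eq_one_comm.mp hU]
  ext i i'
  simp [mul_apply, Matrix.sum_apply, vecMulVec_apply]

end Loewner

lemma vecMulVec_add_vecMulVec_eq_one {ν₁ ν₂ : Fin 2 → ℂ}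
    (h₁ : star ν₁ ⬝ᵥ ν₁ = 1) (h₂ : star ν₂ ⬝ᵥ ν₂ = 1) (h₁₂ : star ν₁ ⬝ᵥ ν₂ = 0) :
    vecMulVec ν₁ (star ν₁) + vecMulVec ν₂ (star ν₂) = 1 := by
  have h₂₁ : star ν₂ ⬝ᵥ ν₁ = 0 := by rw [star_dotProduct, h₁₂, star_zero]
  simpa using sum_vecMulVec_self_star_eq_one (ν := ![ν₁, ν₂]) (by
    intro j k; fin_cases j <;> fin_cases k <;> simp [h₁, h₂, h₁₂, h₂₁])

end Matrix

namespace FRIR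

section Optimization

variable {q q₁ q₂ c : ℝ} {ρ₁ ρ₂ M₀ M₁ M₂ : Matrix (Fin 2) (Fin 2) ℂ}

def PbarCorRange (q q₁ q₂ : ℝ) (ρ₁ ρ₂ : Matrix (Fin 2) (Fin 2) ℂ) : Set ℝ :=
  {x : ℝ | ∃ M₀ M₁ M₂, IsPOVM M₀ M₁ M₂ ∧ PbarCor q q₁ q₂ ρ₁ ρ₂ M₀ M₁ M₂ = x}

lemma trace_rho0 (hq : q₁ + q₂ = 1) (htr₁ : ρ₁.trace = 1) (htr₂ : ρ₂.trace = 1) :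
    (rho0 q₁ q₂ ρ₁ ρ₂).trace = 1 := by
  rw [rho0, trace_add, trace_smul, trace_smul, htr₁, htr₂, smul_eq_mul, smul_eq_mul, mul_one,
    mul_one, ← Complex.ofReal_add, hq, Complex.ofReal_one]

lemma isPOVM_one_zero_zero : IsPOVM 1 0 0 :=
  ⟨.one, .zero, .zero, by rw [add_zero, add_zero]⟩

lemma isPOVM_zero_zero_one : IsPOVM 0 0 1 :=
  ⟨.zero, .zero, .one, by rw [add_zero, zero_add]⟩

lemma IsPOVM.re_trace_mul_add (hM : IsPOVM M₀ M₁ M₂) (A : Matrix (Fin 2) (Fin 2) ℂ) :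
    (A * M₀).trace.re + (A * M₁).trace.re + (A * M₂).trace.re = A.trace.re := by
  rw [← Complex.add_re, ← Complex.add_re, ← trace_add, ← trace_add, ← Matrix.mul_add,
    ← Matrix.mul_add, hM.2.2.2, Matrix.mul_one]

lemma IsPOVM.PIof_mem_Icc (hM : IsPOVM M₀ M₁ M₂) (hρ₀ : (rho0 q₁ q₂ ρ₁ ρ₂).PosSemidef)
    (htr : (rho0 q₁ q₂ ρ₁ ρ₂).trace = 1) : PIof q₁ q₂ ρ₁ ρ₂ M₀ ∈ Set.Icc 0 1 := by
  have hsum := hM.re_trace_mul_add (rho0 q₁ q₂ ρ₁ ρ₂)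
  rw [htr, Complex.one_re] at hsum
  have h₁ := hρ₀.re_trace_mul_nonneg hM.2.1
  have h₂ := hρ₀.re_trace_mul_nonneg hM.2.2.1
  exact ⟨hρ₀.re_trace_mul_nonneg hM.1, by unfold PIof; linarith⟩

lemma PbarCor_le_of_le_smul_rho0 (hM : IsPOVM M₀ M₁ M₂) (htr : (rho0 q₁ q₂ ρ₁ ρ₂).trace = 1)
    (h₁ : (q₁ : ℂ) • ρ₁ ≤ (c : ℂ) • rho0 q₁ q₂ ρ₁ ρ₂)
    (h₂ : (q₂ : ℂ) • ρ₂ ≤ (c : ℂ) • rho0 q₁ q₂ ρ₁ ρ₂) :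
    PbarCor q q₁ q₂ ρ₁ ρ₂ M₀ M₁ M₂ ≤
      q * PIof q₁ q₂ ρ₁ ρ₂ M₀ + c * (1 - PIof q₁ q₂ ρ₁ ρ₂ M₀) := by
  have hsum := hM.re_trace_mul_add (rho0 q₁ q₂ ρ₁ ρ₂)
  rw [htr, Complex.one_re] at hsum
  have e₁ := re_trace_mul_le_of_smul_le h₁ hM.2.1
  have e₂ := re_trace_mul_le_of_smul_le h₂ hM.2.2.1
  unfold PbarCor Pcor PIof
  linear_combination e₁ + e₂ + c * hsum

lemma bddAbove_PbarCorRange (hρ₀ : (rho0 q₁ q₂ ρ₁ ρ₂).PosSemidef)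
    (htr : (rho0 q₁ q₂ ρ₁ ρ₂).trace = 1) (h₁ : (q₁ : ℂ) • ρ₁ ≤ (c : ℂ) • rho0 q₁ q₂ ρ₁ ρ₂)
    (h₂ : (q₂ : ℂ) • ρ₂ ≤ (c : ℂ) • rho0 q₁ q₂ ρ₁ ρ₂) (q : ℝ) :
    BddAbove (PbarCorRange q q₁ q₂ ρ₁ ρ₂) := by
  refine ⟨max q c, ?_⟩
  rintro _ ⟨M₀, M₁, M₂, hM, rfl⟩
  obtain ⟨hP₀, hP₁⟩ := hM.PIof_mem_Icc hρ₀ htr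
  have := PbarCor_le_of_le_smul_rho0 (q := q) hM htr h₁ h₂
  nlinarith [le_max_left q c, le_max_right q c]

lemma PbarCor_le_PbarOpt (hbdd : BddAbove (PbarCorRange q q₁ q₂ ρ₁ ρ₂))
    (hM : IsPOVM M₀ M₁ M₂) : PbarCor q q₁ q₂ ρ₁ ρ₂ M₀ M₁ M₂ ≤ PbarOpt q q₁ q₂ ρ₁ ρ₂ :=
  le_csSup hbdd ⟨M₀, M₁, M₂, hM, rfl⟩

lemma le_PbarOpt (hbdd : BddAbove (PbarCorRange q q₁ q₂ ρ₁ ρ₂))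
    (htr : (rho0 q₁ q₂ ρ₁ ρ₂).trace = 1) : q ≤ PbarOpt q q₁ q₂ ρ₁ ρ₂ := by
  simpa [PbarCor, PIof, Pcor, htr] using PbarCor_le_PbarOpt hbdd isPOVM_one_zero_zero

lemma zero_mem_PIset_of_le (hbdd : BddAbove (PbarCorRange q q₁ q₂ ρ₁ ρ₂)) (htr₂ : ρ₂.trace = 1)
    (h₀ : (q : ℂ) • rho0 q₁ q₂ ρ₁ ρ₂ ≤ (q₂ : ℂ) • ρ₂) (h₁ : (q₁ : ℂ) • ρ₁ ≤ (q₂ : ℂ) • ρ₂) :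
    (0 : ℝ) ∈ PIset q q₁ q₂ ρ₁ ρ₂ := by
  have hval : PbarCor q q₁ q₂ ρ₁ ρ₂ 0 0 1 = q₂ := by simp [PbarCor, PIof, Pcor, htr₂]
  refine ⟨0, 0, 1, isPOVM_zero_zero_one, ?_, by simp [PIof]⟩
  refine le_antisymm (PbarCor_le_PbarOpt hbdd isPOVM_zero_zero_one) ?_
  rw [hval]
  refine csSup_le ?_ ?_
  · exact ⟨_, 0, 0, 1, isPOVM_zero_zero_one, rfl⟩
  rintro _ ⟨M₀, M₁, M₂, hM, rfl⟩
  have hsum := hM.re_trace_mul_add ρ₂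
  rw [htr₂, Complex.one_re] at hsum
  have e₀ := re_trace_mul_le_of_smul_le h₀ hM.1
  have e₁ := re_trace_mul_le_of_smul_le h₁ hM.2.1
  unfold PbarCor Pcor PIof
  linear_combination e₀ + e₁ + q₂ * hsum

lemma le_of_zero_mem_PIset (hbdd : BddAbove (PbarCorRange q q₁ q₂ ρ₁ ρ₂))
    (htr : (rho0 q₁ q₂ ρ₁ ρ₂).trace = 1) (h₁ : (q₁ : ℂ) • ρ₁ ≤ (c : ℂ) • rho0 q₁ q₂ ρ₁ ρ₂)
    (h₂ : (q₂ : ℂ) • ρ₂ ≤ (c : ℂ) • rho0 q₁ q₂ ρ₁ ρ₂) (h : (0 : ℝ) ∈ PIset q q₁ q₂ ρ₁ ρ₂) :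
    q ≤ c := by
  obtain ⟨M₀, M₁, M₂, hM, hopt, hPI⟩ := h
  have := PbarCor_le_of_le_smul_rho0 (q := q) hM htr h₁ h₂
  rw [hPI, hopt] at this
  linarith [le_PbarOpt hbdd htr]

lemma eq_zero_of_PbarCor_eq_PbarOpt (hρ₀ : (rho0 q₁ q₂ ρ₁ ρ₂).PosDef)
    (h₁ : (q₁ : ℂ) • ρ₁ ≤ (c : ℂ) • rho0 q₁ q₂ ρ₁ ρ₂) (hcq : c < q)
    (hbdd : BddAbove (PbarCorRange q q₁ q₂ ρ₁ ρ₂)) (hM : IsPOVM M₀ M₁ M₂)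
    (hopt : PbarCor q q₁ q₂ ρ₁ ρ₂ M₀ M₁ M₂ = PbarOpt q q₁ q₂ ρ₁ ρ₂) : M₁ = 0 := by
  by_contra hM₁
  have hpos := hρ₀.re_trace_mul_pos hM.2.1 hM₁
  have hgain := re_trace_mul_le_of_smul_le h₁ hM.2.1
  have hM' : IsPOVM (M₀ + M₁) 0 M₂ := ⟨hM.1.add hM.2.1, .zero, hM.2.2.1, by
    rw [add_zero]; exact hM.2.2.2⟩
  have hle := PbarCor_le_PbarOpt hbdd hM'
  rw [← hopt] at hle
  simp only [PbarCor, PIof, Pcor, Matrix.mul_add, trace_add, Complex.add_re, Matrix.mul_zero,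
    trace_zero, Complex.zero_re] at hle
  linarith [mul_pos (sub_pos.mpr hcq) hpos]

end Optimization

theorem stmt18_general
    (q₁ q₂ : ℝ) (ρ₁ ρ₂ : Matrix (Fin 2) (Fin 2) ℂ)
    (hq : q₁ + q₂ = 1) (htr₁ : ρ₁.trace = 1) (htr₂ : ρ₂.trace = 1)
    (hρ0 : (rho0 q₁ q₂ ρ₁ ρ₂).PosDef)
    (S : Matrix (Fin 2) (Fin 2) ℂ) (hS : S.PosSemidef) (hSS : S * S = rho0 q₁ q₂ ρ₁ ρ₂)
    (ν₁ ν₂ : Fin 2 → ℂ)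
    (hν₁ : star ν₁ ⬝ᵥ ν₁ = 1) (hν₂ : star ν₂ ⬝ᵥ ν₂ = 1) (hν₁₂ : star ν₁ ⬝ᵥ ν₂ = 0)
    (C₁ C₂ : ℝ) (hC12 : C₁ ≤ C₂) (hCsum : 1 < C₁ + C₂)
    (hbar₁ : S * ((C₁ : ℂ) • vecMulVec ν₁ (star ν₁)
        + ((1 - C₂ : ℝ) : ℂ) • vecMulVec ν₂ (star ν₂)) * S = (q₁ : ℂ) • ρ₁)
    (hbar₂ : S * (((1 - C₁ : ℝ) : ℂ) • vecMulVec ν₁ (star ν₁)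
        + (C₂ : ℂ) • vecMulVec ν₂ (star ν₂)) * S = (q₂ : ℂ) • ρ₂)
    (q : ℝ)
    (hcase : (C₁ ≤ 1 / 2 ∧ 1 / 2 < C₂ ∧ q0low q₁ q₂ ρ₁ ρ₂ < q ∧ q < q0high q₁ q₂ ρ₁ ρ₂)
      ∨ (1 / 2 < C₁ ∧ C₁ < q ∧ q < q0high q₁ q₂ ρ₁ ρ₂)) :
    ∀ M₀ M₁ M₂ : Matrix (Fin 2) (Fin 2) ℂ, IsPOVM M₀ M₁ M₂ →
      PbarCor q q₁ q₂ ρ₁ ρ₂ M₀ M₁ M₂ = PbarOpt q q₁ q₂ ρ₁ ρ₂ → M₁ = 0 := by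
  intro M₀ M₁ M₂ hM hopt
  have hmono {x y u v : ℝ} (hxu : x ≤ u) (hyv : y ≤ v) :=
    conj_smul_add_smul_le hS (posSemidef_vecMulVec_self_star ν₁)
      (posSemidef_vecMulVec_self_star ν₂) hxu hyv
  have hρ₀ (c : ℝ) : S * ((c : ℂ) • vecMulVec ν₁ (star ν₁) + (c : ℂ) • vecMulVec ν₂ (star ν₂)) * S
      = (c : ℂ) • rho0 q₁ q₂ ρ₁ ρ₂ := by
    rw [← smul_add, vecMulVec_add_vecMulVec_eq_one hν₁ hν₂ hν₁₂, Matrix.mul_smul, Matrix.mul_one,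
      Matrix.smul_mul, hSS]
  have h₁ (c : ℝ) (h : C₁ ≤ c) (h' : 1 - C₂ ≤ c) :
      (q₁ : ℂ) • ρ₁ ≤ (c : ℂ) • rho0 q₁ q₂ ρ₁ ρ₂ := hbar₁ ▸ hρ₀ c ▸ hmono h h'
  have h₂ : (q₂ : ℂ) • ρ₂ ≤ (C₂ : ℂ) • rho0 q₁ q₂ ρ₁ ρ₂ := hbar₂ ▸ hρ₀ C₂ ▸ hmono (by linarith) le_rfl
  have htr := trace_rho0 hq htr₁ htr₂
  have hbdd := bddAbove_PbarCorRange hρ0.posSemidef htr (h₁ C₂ hC12 (by linarith)) h₂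
  have hC₁q : C₁ < q := by
    rcases hcase with ⟨hC₁, hC₂, hlow, -⟩ | ⟨-, hC₁q, -⟩
    · have hhalf : (0 : ℝ) ∈ PIset (1 / 2) q₁ q₂ ρ₁ ρ₂ :=
        zero_mem_PIset_of_le (hbdd _) htr₂ (hbar₂ ▸ hρ₀ (1 / 2) ▸ hmono (by linarith) hC₂.le)
          (hbar₁ ▸ hbar₂ ▸ hmono (by linarith) (by linarith))
      have : 1 / 2 ≤ q0low q₁ q₂ ρ₁ ρ₂ :=
        le_csSup ⟨C₂, fun q' hq' ↦ le_of_zero_mem_PIset (hbdd q') htr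
          (h₁ C₂ hC12 (by linarith)) h₂ hq'.2⟩ ⟨by norm_num, hhalf⟩
      linarith
    · exact hC₁q
  exact eq_zero_of_PbarCor_eq_PbarOpt hρ0 (h₁ C₁ le_rfl (by linarith)) hC₁q (hbdd q) hM hopt

/-- Suppose `ρ₁₂ ≠ 0`. If either (`C₁ ≤ 1/2 < C₂` and
`q₀⁽⁰⁾ < q < q₀⁽¹⁾`) or (`1/2 < C₁` and `C₁ < q < q₀⁽¹⁾`), then every POVM
attaining `P̄_cor^opt(q)` has `M₁ = 0`. -/
theorem stmt18
    (q₁ q₂ : ℝ) (ρ₁ ρ₂ : Matrix (Fin 2) (Fin 2) ℂ)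
    (hq₁ : 0 < q₁) (hq₂ : 0 < q₂) (hq : q₁ + q₂ = 1)
    (hρ₁ : ρ₁.PosSemidef) (htr₁ : ρ₁.trace = 1)
    (hρ₂ : ρ₂.PosSemidef) (htr₂ : ρ₂.trace = 1)
    (hρ0 : (rho0 q₁ q₂ ρ₁ ρ₂).PosDef)
    (S : Matrix (Fin 2) (Fin 2) ℂ) (hS : S.PosSemidef) (hSS : S * S = rho0 q₁ q₂ ρ₁ ρ₂)
    (ν₁ ν₂ : Fin 2 → ℂ)
    (hν₁ : star ν₁ ⬝ᵥ ν₁ = 1) (hν₂ : star ν₂ ⬝ᵥ ν₂ = 1) (hν₁₂ : star ν₁ ⬝ᵥ ν₂ = 0)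
    (C₁ C₂ : ℝ) (hC12 : C₁ ≤ C₂) (hCsum : 1 < C₁ + C₂)
    (hbar₁ : S * ((C₁ : ℂ) • vecMulVec ν₁ (star ν₁)
        + ((1 - C₂ : ℝ) : ℂ) • vecMulVec ν₂ (star ν₂)) * S = (q₁ : ℂ) • ρ₁)
    (hbar₂ : S * (((1 - C₁ : ℝ) : ℂ) • vecMulVec ν₁ (star ν₁)
        + (C₂ : ℂ) • vecMulVec ν₂ (star ν₂)) * S = (q₂ : ℂ) • ρ₂)
    (ρ11 ρ22 : ℝ) (ρ12 : ℂ)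
    (h11 : (ρ11 : ℂ) = star ν₁ ⬝ᵥ (rho0 q₁ q₂ ρ₁ ρ₂ *ᵥ ν₁))
    (h22 : (ρ22 : ℂ) = star ν₂ ⬝ᵥ (rho0 q₁ q₂ ρ₁ ρ₂ *ᵥ ν₂))
    (h12 : ρ12 = star ν₁ ⬝ᵥ (rho0 q₁ q₂ ρ₁ ρ₂ *ᵥ ν₂))
    (h12nz : ρ12 ≠ 0) (q : ℝ)
    (hcase : (C₁ ≤ 1 / 2 ∧ 1 / 2 < C₂ ∧ q0low q₁ q₂ ρ₁ ρ₂ < q ∧ q < q0high q₁ q₂ ρ₁ ρ₂)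
      ∨ (1 / 2 < C₁ ∧ C₁ < q ∧ q < q0high q₁ q₂ ρ₁ ρ₂)) :
    ∀ M₀ M₁ M₂ : Matrix (Fin 2) (Fin 2) ℂ, IsPOVM M₀ M₁ M₂ →
      PbarCor q q₁ q₂ ρ₁ ρ₂ M₀ M₁ M₂ = PbarOpt q q₁ q₂ ρ₁ ρ₂ → M₁ = 0 :=
  stmt18_general q₁ q₂ ρ₁ ρ₂ hq htr₁ htr₂ hρ0 S hS hSS ν₁ ν₂ hν₁ hν₂ hν₁₂ C₁ C₂ hC12 hCsum hbar₁
    hbar₂ q hcase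

end FRIR
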